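/- Let λ > 0. There exist no real numbers φ and ϑ for which the three expressions 2 − cos²ϑ·(1 + 2cos²φ), (λ/2)·cosφ·cosϑ·(2cos²φ + sin²φ), and (cosϑ/(2√3))·(2 − cos²ϑ + cos²φ·cos²ϑ − √3·λ·sinφ·cos²φ·sinϑ·cosϑ) vanish simultaneously. Consequently the reduced system has no critical points at infinity. -/
import Mathlib

/-- For `λ > 0` the three right-hand sides of the
compactified reduced system at infinity (`ρ = 1`), namely
`2 − cos²ϑ(1 + 2cos²φ)`, `(λ/2)cosφ cosϑ (2cos²φ + sin²φ)` and
`(cosϑ/(2√3))(2 − cos²ϑ + cos²φ cos²ϑ − √3 λ sinφ cos²φ sinϑ cosϑ)`,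
never vanish simultaneously; consequently the reduced system has no critical
points at infinity. -/
theorem no_critical_points_at_infinity (lam : ℝ) (hlam : 0 < lam) :
    ¬ ∃ φ ϑ : ℝ,
      2 - Real.cos ϑ ^ 2 * (1 + 2 * Real.cos φ ^ 2) = 0 ∧
      (lam / 2) * Real.cos φ * Real.cos ϑ
          * (2 * Real.cos φ ^ 2 + Real.sin φ ^ 2) = 0 ∧
      (Real.cos ϑ / (2 * Real.sqrt 3))
          * (2 - Real.cos ϑ ^ 2 + Real.cos φ ^ 2 * Real.cos ϑ ^ 2
             - Real.sqrt 3 * lam * Real.sin φ * Real.cos φ ^ 2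
                * Real.sin ϑ * Real.cos ϑ) = 0 := by
  rintro ⟨φ, ϑ, h1, h2, -⟩
  have hs : Real.sin φ ^ 2 + Real.cos φ ^ 2 = 1 := Real.sin_sq_add_cos_sq φ
  have hpos : 0 < 2 * Real.cos φ ^ 2 + Real.sin φ ^ 2 := by nlinarith [sq_nonneg (Real.cos φ)]
  have h2' : Real.cos φ * Real.cos ϑ = 0 := by
    have := hlam.ne'
    rcases mul_eq_zero.1 h2 with h | h
    · rcases mul_eq_zero.1 h with h | h
      · exfalso; rcases mul_eq_zero.1 h with h | h
        · exact this (by linarith)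
        · nlinarith [Real.cos_sq_le_one ϑ, sq_nonneg (Real.cos φ)]
      · nlinarith [Real.cos_sq_le_one ϑ, sq_nonneg (Real.cos φ)]
    · exact absurd h hpos.ne'
  rcases mul_eq_zero.1 h2' with h | h
  · nlinarith [Real.cos_sq_le_one ϑ]
  · nlinarith [sq_nonneg (Real.cos φ)]
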